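/- Suppose lim_{x→a⁺} s(x) = ∞ and the right boundary b is natural, i.e. lim_{x→b} s(x)·M[a,x] = ∞ and ∫_{x₀}^{b} M[x₀,v] s(v) dv = ∞ (so ξ(x) → ∞ as x → b). Then for any fixed y₀ ∈ (a,b): lim_{y→b} g(y)/ξ(y) = c̄(b), lim_{y→b} (g(y) − g(y₀))/(ξ(y) − ξ(y₀)) = c̄(b), and (g(y) − g(w))/(ξ(y) − ξ(w)) → c̄(b) as (w,y) → (b,b) with w < y < b. -/

import Mathlib

open MeasureTheory Filter Set Topology
open scoped Classical

noncomputable section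

/-- The state interval `(a, b)` where `a` is real and `b ∈ (a, ∞]`. -/
def stInt (a : ℝ) (b : EReal) : Set ℝ := {x : ℝ | a < x ∧ (x : EReal) < b}

/-- The filter of approach to the right endpoint `b ∈ (a, ∞]`:
`atTop` when `b = ∞`, and the left-neighborhood filter of `b` otherwise. -/
def atB (b : EReal) : Filter ℝ :=
  if b = ⊤ then Filter.atTop else nhdsWithin b.toReal (Set.Iio b.toReal)

/-- The scale density `s(x) = exp(-∫_{x₀}^x 2μ/σ²)`. -/
def sDen (μ σ : ℝ → ℝ) (x₀ x : ℝ) : ℝ :=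
  Real.exp (-(∫ y in x₀..x, 2 * μ y / (σ y) ^ 2))

/-- The speed density `m(x) = 2/(σ(x)² s(x))`. -/
def mDen (μ σ : ℝ → ℝ) (x₀ x : ℝ) : ℝ :=
  2 / ((σ x) ^ 2 * sDen μ σ x₀ x)

/-- `M[a,x] = ∫_a^x m(u) du`. -/
def Mab (μ σ : ℝ → ℝ) (x₀ a x : ℝ) : ℝ :=
  ∫ u in Set.Ioo a x, mDen μ σ x₀ u

/-- The time potential `ξ(x) = ∫_{x₀}^x M[a,v] s(v) dv`. -/
def xiF (μ σ : ℝ → ℝ) (x₀ a x : ℝ) : ℝ :=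
  ∫ v in x₀..x, Mab μ σ x₀ a v * sDen μ σ x₀ v

/-- The running reward potential `g(x) = ∫_{x₀}^x (∫_a^v c(u) m(u) du) s(v) dv`. -/
def gF (μ σ c : ℝ → ℝ) (x₀ a x : ℝ) : ℝ :=
  ∫ v in x₀..x, (∫ u in Set.Ioo a v, c u * mDen μ σ x₀ u) * sDen μ σ x₀ v

/-- `h(x) = (∫_a^x (γ c(u) + p μ(u)) m(u) du) / M[a,x]`. -/
def hF (μ σ c : ℝ → ℝ) (x₀ a p γ x : ℝ) : ℝ :=
  (∫ u in Set.Ioo a x, (γ * c u + p * μ u) * mDen μ σ x₀ u) / Mab μ σ x₀ a x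

/-- The long-term average reward `F(w,y)` of the `(w,y)`-impulse policy. -/
def FF (μ σ c : ℝ → ℝ) (x₀ a p K γ w y : ℝ) : ℝ :=
  (p * (y - w) - K + γ * (gF μ σ c x₀ a y - gF μ σ c x₀ a w)) /
    (xiF μ σ x₀ a y - xiF μ σ x₀ a w)

/-- `c̄(b)`: equals `⟨c,π⟩` when `M[a,b] < ∞` and the boundary value `c(b)` otherwise. -/
def cbar (μ σ c : ℝ → ℝ) (x₀ a : ℝ) (b : EReal) (cb : ℝ) : ℝ :=
  if MeasureTheory.IntegrableOn (mDen μ σ x₀) (stInt a b) MeasureTheory.volume then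
    (∫ u in stInt a b, c u * mDen μ σ x₀ u) / (∫ u in stInt a b, mDen μ σ x₀ u)
  else cb

/-!
Write `A(v) = ∫_a^v c m` and `M(v) = M[a,v]`, so that `g' = A s` and `ξ' = M s > 0`. The heart of
the matter is `A(v) - c̄(b) M(v) = o(M(v))` as `v → b`: if `M[a,b] < ∞` both `A` and `M` converge
and `c̄(b)` is the ratio of the limits; otherwise `M → ∞` and `A / M` is a Cesàro mean of `c`
against `m`, which converges to `c(b)`. Multiplying by `s` gives `g' - c̄(b) ξ' = o(ξ')`, and
integrating over `[w, y]` near `b` gives the same relation for the increments of `g` and `ξ`: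
this is the double limit. Since `ξ → ∞`, a Stolz–Cesàro argument turns it into the two one-sided
limits.
-/

open Asymptotics

lemma tendsto_div_of_isLittleO_sub_mul {α : Type*} {l : Filter α} {N D : α → ℝ} {L : ℝ}
    (h : (fun x => N x - L * D x) =o[l] D) (hD : ∀ᶠ x in l, D x ≠ 0) :
    Tendsto (fun x => N x / D x) l (𝓝 L) := by
  have := h.tendsto_div_nhds_zero.add_const L
  rw [zero_add] at this
  refine this.congr' ?_
  filter_upwards [hD] with x hx
  field_simp
  ring

theorem isLittleO_sub_mul_of_isLittleO_increments {α : Type*} {l : Filter α} [l.NeBot]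
    {G Ξ : α → ℝ} {L : ℝ} (hΞ : Tendsto Ξ l atTop)
    (h : (fun q : α × α => G q.2 - G q.1 - L * (Ξ q.2 - Ξ q.1)) =o[l ×ˢ l]
      fun q => Ξ q.2 - Ξ q.1) :
    (fun y => G y - L * Ξ y) =o[l] Ξ := by
  refine isLittleO_iff.2 fun ε hε => ?_
  obtain ⟨w, hw⟩ := (h.def (half_pos hε)).curry.exists
  set K := |G w - L * Ξ w| + ε / 2 * |Ξ w|
  filter_upwards [hw, hΞ.eventually_ge_atTop (2 * K / ε), hΞ.eventually_ge_atTop 0]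
    with y hy hKy hy₀
  simp only [Real.norm_eq_abs] at hy ⊢
  have hK : K ≤ ε / 2 * |Ξ y| := by
    rw [div_le_iff₀' hε] at hKy
    rw [abs_of_nonneg hy₀]
    linarith
  calc |G y - L * Ξ y| = |(G y - G w - L * (Ξ y - Ξ w)) + (G w - L * Ξ w)| := by ring_nf
    _ ≤ |G y - G w - L * (Ξ y - Ξ w)| + |G w - L * Ξ w| := abs_add_le _ _
    _ ≤ ε / 2 * (|Ξ y| + |Ξ w|) + |G w - L * Ξ w| := by
        gcongr
        exact hy.trans (by gcongr; exact abs_sub _ _)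
    _ ≤ ε * |Ξ y| := by linarith [show K = |G w - L * Ξ w| + ε / 2 * |Ξ w| from rfl]

theorem tendsto_div_of_isLittleO_increments {α : Type*} {l : Filter α} [l.NeBot]
    {G Ξ : α → ℝ} {L : ℝ} (hΞ : Tendsto Ξ l atTop)
    (h : (fun q : α × α => G q.2 - G q.1 - L * (Ξ q.2 - Ξ q.1)) =o[l ×ˢ l]
      fun q => Ξ q.2 - Ξ q.1) :
    Tendsto (fun y => G y / Ξ y) l (𝓝 L) :=
  tendsto_div_of_isLittleO_sub_mul (isLittleO_sub_mul_of_isLittleO_increments hΞ h)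
    (hΞ.eventually_gt_atTop 0 |>.mono fun _ h => h.ne')

lemma setIntegral_Ioo_eq_intervalIntegral {a v : ℝ} (h : a ≤ v) (f : ℝ → ℝ) :
    ∫ u in Ioo a v, f u = ∫ u in a..v, f u := by
  rw [intervalIntegral.integral_of_le h, integral_Ioc_eq_integral_Ioo]

lemma setIntegral_Ioo_pos {a v : ℝ} (hav : a < v) {f : ℝ → ℝ} (hf : IntegrableOn f (Ioo a v))
    (hpos : ∀ x ∈ Ioo a v, 0 < f x) : 0 < ∫ u in Ioo a v, f u := by
  rw [setIntegral_Ioo_eq_intervalIntegral hav.le]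
  exact intervalIntegral.intervalIntegral_pos_of_pos_on
    ((intervalIntegrable_iff_integrableOn_Ioo_of_le hav.le).2 hf) hpos hav

lemma continuousOn_primitive_of_isOpen {S : Set ℝ} (hS : IsOpen S) {f : ℝ → ℝ} {x₀ : ℝ}
    (hf : ContinuousOn f S) (hfi : ∀ v ∈ S, IntervalIntegrable f volume x₀ v) :
    ContinuousOn (fun x => ∫ u in x₀..x, f u) S := fun v hv =>
  (intervalIntegral.integral_hasDerivAt_right (hfi v hv) (hf.stronglyMeasurableAtFilter hS v hv)
    (hf.continuousAt (hS.mem_nhds hv))).continuousAt.continuousWithinAt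

lemma intervalIntegral_sub_intervalIntegral_pos {S : Set ℝ} (hS : OrdConnected S) {f : ℝ → ℝ}
    {x₀ : ℝ} (hfi : ∀ y ∈ S, IntervalIntegrable f volume x₀ y) (hf : ∀ x ∈ S, 0 < f x)
    {w y : ℝ} (hw : w ∈ S) (hy : y ∈ S) (hwy : w < y) :
    0 < (∫ u in x₀..y, f u) - ∫ u in x₀..w, f u := by
  rw [intervalIntegral.integral_interval_sub_left (hfi y hy) (hfi w hw)]
  exact intervalIntegral.intervalIntegral_pos_of_pos_on ((hfi w hw).symm.trans (hfi y hy))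
    (fun x hx => hf x (hS.out hw hy (Ioo_subset_Icc_self hx))) hwy

section StateInterval

variable {a : ℝ} {b : EReal}

lemma stInt_subset_of_mem {x : ℝ} (hx : x ∈ stInt a b) : stInt x b ⊆ stInt a b :=
  fun _ hv => ⟨hx.1.trans hv.1, hv.2⟩

lemma Ioo_subset_stInt {v : ℝ} (hv : v ∈ stInt a b) : Ioo a v ⊆ stInt a b :=
  fun _ hu => ⟨hu.1, (EReal.coe_lt_coe_iff.2 hu.2).trans hv.2⟩

variable (a b) in
lemma ordConnected_stInt : OrdConnected (stInt a b) :=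
  ⟨fun _ hx _ hy _ hz => ⟨hx.1.trans_le hz.1, (EReal.coe_le_coe_iff.2 hz.2).trans_lt hy.2⟩⟩

variable (a b) in
lemma isOpen_stInt : IsOpen (stInt a b) :=
  isOpen_Ioi.inter (isOpen_Iio.preimage continuous_coe_real_ereal)

lemma ContinuousOn.intervalIntegrable_of_mem_stInt {f : ℝ → ℝ} (hf : ContinuousOn f (stInt a b))
    {x y : ℝ} (hx : x ∈ stInt a b) (hy : y ∈ stInt a b) : IntervalIntegrable f volume x y :=
  (hf.mono ((ordConnected_stInt a b).uIcc_subset hx hy)).intervalIntegrable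

lemma atB_hasBasis (hab : (a : EReal) < b) : (atB b).HasBasis (· ∈ stInt a b) (stInt · b) := by
  unfold atB
  split_ifs with hb
  · subst hb
    exact (atTop_basis_Ioi' a).congr (by simp [stInt]) fun x _ => by ext; simp [stInt]
  · lift b to ℝ using ⟨hb, ((EReal.bot_lt_coe a).trans hab).ne'⟩
    have hab' : a < b := EReal.coe_lt_coe_iff.1 hab
    refine ((nhdsLT_basis_of_exists_lt ⟨a, hab'⟩).restrict (q := (a < ·)) fun x hx =>
      ⟨max x ((a + b) / 2), max_lt hx (by linarith), lt_max_of_lt_right (by linarith),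
        Ioo_subset_Ioo_left (le_max_left _ _)⟩).congr
      (fun x => by simp [stInt, and_comm]) fun x _ => by ext; simp [stInt]

instance atB_neBot (b : EReal) : (atB b).NeBot := by
  unfold atB; split_ifs <;> infer_instance

instance atB_isCountablyGenerated (b : EReal) : (atB b).IsCountablyGenerated := by
  unfold atB; split_ifs <;> infer_instance

lemma stInt_mem_atB (hab : (a : EReal) < b) : stInt a b ∈ atB b :=
  let ⟨_, hx⟩ := (atB_hasBasis hab).ex_mem
  (atB_hasBasis hab).mem_iff.2 ⟨_, hx, stInt_subset_of_mem hx⟩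

lemma le_of_tendsto_atB_of_monotoneOn (hab : (a : EReal) < b) {c : ℝ → ℝ} {cb : ℝ}
    (hc : MonotoneOn c (stInt a b)) (hcb : Tendsto c (atB b) (𝓝 cb)) {x : ℝ}
    (hx : x ∈ stInt a b) : c x ≤ cb :=
  ge_of_tendsto hcb <| mem_of_superset ((atB_hasBasis hab).mem_of_mem hx) fun _ hv =>
    hc hx (stInt_subset_of_mem hx hv) hv.1.le

lemma integrableOn_mul_of_monotoneOn (hab : (a : EReal) < b) {c m : ℝ → ℝ} {cb : ℝ}
    (hc : ContinuousOn c (stInt a b)) (hc₀ : ∀ x ∈ stInt a b, 0 ≤ c x)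
    (hcmono : MonotoneOn c (stInt a b)) (hcb : Tendsto c (atB b) (𝓝 cb))
    ⦃T : Set ℝ⦄ (hTS : T ⊆ stInt a b) (hT : MeasurableSet T) (hm : IntegrableOn m T) :
    IntegrableOn (fun u => c u * m u) T :=
  hm.bdd_mul ((hc.mono hTS).aestronglyMeasurable hT) <| (ae_restrict_mem hT).mono fun x hx => by
    rw [Real.norm_of_nonneg (hc₀ x (hTS hx))]
    exact le_of_tendsto_atB_of_monotoneOn hab hcmono hcb (hTS hx)

lemma continuousOn_setIntegral_Ioo {f : ℝ → ℝ} (hf : ContinuousOn f (stInt a b))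
    (hfi : ∀ x ∈ stInt a b, IntegrableOn f (Ioo a x)) :
    ContinuousOn (fun v => ∫ u in Ioo a v, f u) (stInt a b) :=
  (continuousOn_primitive_of_isOpen (isOpen_stInt a b) hf fun v hv =>
    (intervalIntegrable_iff_integrableOn_Ioo_of_le hv.1.le).2 (hfi v hv)).congr fun v hv =>
      setIntegral_Ioo_eq_intervalIntegral hv.1.le f

lemma restrict_stInt_restrict_Ioo {v : ℝ} (hv : v ∈ stInt a b) :
    (volume.restrict (stInt a b)).restrict (Ioo a v) = volume.restrict (Ioo a v) := by
  rw [Measure.restrict_restrict measurableSet_Ioo, inter_eq_left.2 (Ioo_subset_stInt hv)]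

lemma aecover_Ioo_atB (hab : (a : EReal) < b) :
    AECover (volume.restrict (stInt a b)) (atB b) (Ioo a ·) where
  ae_eventually_mem := (ae_restrict_mem (isOpen_stInt a b).measurableSet).mono fun _ hx =>
    mem_of_superset ((atB_hasBasis hab).mem_of_mem hx) fun _ hv => ⟨hx.1, hv.1⟩
  measurableSet _ := measurableSet_Ioo

lemma tendsto_setIntegral_Ioo_atB (hab : (a : EReal) < b) {f : ℝ → ℝ}
    (hf : IntegrableOn f (stInt a b)) :
    Tendsto (fun v => ∫ u in Ioo a v, f u) (atB b) (𝓝 (∫ u in stInt a b, f u)) := by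
  refine ((aecover_Ioo_atB hab).integral_tendsto_of_countably_generated hf).congr' ?_
  filter_upwards [stInt_mem_atB hab] with v hv
  rw [restrict_stInt_restrict_Ioo hv]

lemma tendsto_setIntegral_Ioo_atB_atTop (hab : (a : EReal) < b) {f : ℝ → ℝ}
    (hf : ContinuousOn f (stInt a b)) (hf₀ : ∀ x ∈ stInt a b, 0 ≤ f x)
    (hfi : ∀ x ∈ stInt a b, IntegrableOn f (Ioo a x)) (hnot : ¬ IntegrableOn f (stInt a b)) :
    Tendsto (fun v => ∫ u in Ioo a v, f u) (atB b) atTop := by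
  have hS := (isOpen_stInt a b).measurableSet
  have hnn : 0 ≤ᵐ[volume.restrict (stInt a b)] f := (ae_restrict_mem hS).mono hf₀
  have htop : ∫⁻ u in stInt a b, ENNReal.ofReal (f u) = ⊤ := by
    by_contra h
    exact hnot ⟨hf.aestronglyMeasurable hS,
      (hasFiniteIntegral_iff_ofReal hnn).2 (lt_top_iff_ne_top.2 h)⟩
  rw [← ENNReal.tendsto_ofReal_nhds_top, ← htop]
  refine ((aecover_Ioo_atB hab).lintegral_tendsto_of_countably_generated
    (hf.aemeasurable hS).ennreal_ofReal).congr' ?_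
  filter_upwards [stInt_mem_atB hab] with v hv
  rw [restrict_stInt_restrict_Ioo hv, ofReal_integral_eq_lintegral_ofReal (hfi v hv)
    ((ae_restrict_mem measurableSet_Ioo).mono fun u hu => hf₀ u (Ioo_subset_stInt hv hu))]

lemma isLittleO_intervalIntegral_atB_prod (hab : (a : EReal) < b) {F ψ : ℝ → ℝ}
    (hψi : ∀ w ∈ stInt a b, ∀ y ∈ stInt a b, IntervalIntegrable ψ volume w y)
    (hψ₀ : ∀ x ∈ stInt a b, 0 ≤ ψ x) (h : F =o[atB b] ψ) :
    (fun q : ℝ × ℝ => ∫ v in q.1..q.2, F v) =o[atB b ×ˢ atB b]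
      fun q => ∫ v in q.1..q.2, ψ v := by
  refine isLittleO_iff.2 fun ε hε => ?_
  obtain ⟨x₁, hx₁, hbound⟩ := (atB_hasBasis hab).eventually_iff.1 (h.def hε)
  have hx₁S := stInt_subset_of_mem hx₁
  filter_upwards [prod_mem_prod ((atB_hasBasis hab).mem_of_mem hx₁)
    ((atB_hasBasis hab).mem_of_mem hx₁)] with q hq
  have hsub : uIcc q.1 q.2 ⊆ stInt x₁ b := (ordConnected_stInt x₁ b).uIcc_subset hq.1 hq.2
  have hpt : ∀ᵐ t ∂volume.restrict (uIoc q.1 q.2), ‖F t‖ ≤ ε * ψ t :=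
    (ae_restrict_mem measurableSet_uIoc).mono fun t ht => by
      have ht' := hsub (uIoc_subset_uIcc ht)
      simpa only [Real.norm_of_nonneg (hψ₀ t (hx₁S ht'))] using hbound ht'
  calc ‖∫ v in q.1..q.2, F v‖ ≤ |∫ v in q.1..q.2, ε * ψ v| :=
        intervalIntegral.norm_integral_le_abs_of_norm_le hpt
          ((hψi _ (hx₁S hq.1) _ (hx₁S hq.2)).const_mul ε)
    _ = ε * ‖∫ v in q.1..q.2, ψ v‖ := by
        rw [intervalIntegral.integral_const_mul, abs_mul, abs_of_pos hε, Real.norm_eq_abs]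

lemma isLittleO_primitive_increments (hab : (a : EReal) < b) {φ ψ : ℝ → ℝ} {x₀ L : ℝ}
    (hφ : ∀ y ∈ stInt a b, IntervalIntegrable φ volume x₀ y)
    (hψ : ∀ y ∈ stInt a b, IntervalIntegrable ψ volume x₀ y)
    (hψ₀ : ∀ x ∈ stInt a b, 0 ≤ ψ x) (h : (fun v => φ v - L * ψ v) =o[atB b] ψ) :
    (fun q : ℝ × ℝ => (∫ v in x₀..q.2, φ v) - (∫ v in x₀..q.1, φ v) -
        L * ((∫ v in x₀..q.2, ψ v) - ∫ v in x₀..q.1, ψ v)) =o[atB b ×ˢ atB b]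
      fun q => (∫ v in x₀..q.2, ψ v) - ∫ v in x₀..q.1, ψ v := by
  have hψi : ∀ w ∈ stInt a b, ∀ y ∈ stInt a b, IntervalIntegrable ψ volume w y :=
    fun w hw y hy => (hψ w hw).symm.trans (hψ y hy)
  have hS := prod_mem_prod (stInt_mem_atB hab) (stInt_mem_atB hab)
  refine (isLittleO_intervalIntegral_atB_prod hab hψi hψ₀ h).congr' ?_ ?_
  · filter_upwards [hS] with q hq
    rw [intervalIntegral.integral_sub ((hφ _ hq.1).symm.trans (hφ _ hq.2))
        ((hψi _ hq.1 _ hq.2).const_mul L), intervalIntegral.integral_const_mul,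
      intervalIntegral.integral_interval_sub_left (hφ _ hq.2) (hφ _ hq.1),
      intervalIntegral.integral_interval_sub_left (hψ _ hq.2) (hψ _ hq.1)]
  · filter_upwards [hS] with q hq
    exact (intervalIntegral.integral_interval_sub_left (hψ _ hq.2) (hψ _ hq.1)).symm

lemma isLittleO_setIntegral_Ioo_sub_of_integrableOn (hab : (a : EReal) < b) {h m : ℝ → ℝ}
    (hh : IntegrableOn h (stInt a b)) (hm : IntegrableOn m (stInt a b))
    (hm₀ : ∫ u in stInt a b, m u ≠ 0) :
    (fun v => (∫ u in Ioo a v, h u) -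
        (∫ u in stInt a b, h u) / (∫ u in stInt a b, m u) * ∫ u in Ioo a v, m u)
      =o[atB b] fun v => ∫ u in Ioo a v, m u := by
  have hM := tendsto_setIntegral_Ioo_atB hab hm
  have h0 := (tendsto_setIntegral_Ioo_atB hab hh).sub
    (hM.const_mul ((∫ u in stInt a b, h u) / ∫ u in stInt a b, m u))
  rw [div_mul_cancel₀ _ hm₀, sub_self] at h0
  refine ((isLittleO_one_iff ℝ).2 h0).trans_isBigO
    ((isBigO_const_left_iff_pos_le_norm one_ne_zero).2 ?_)
  exact ⟨‖∫ u in stInt a b, m u‖ / 2, by positivity,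
    hM.norm.eventually (eventually_ge_nhds (half_lt_self (norm_pos_iff.2 hm₀)))⟩

lemma isLittleO_setIntegral_Ioo_sub_of_not_integrableOn (hab : (a : EReal) < b)
    {c m : ℝ → ℝ} {cb : ℝ} (hm : ContinuousOn m (stInt a b))
    (hm₀ : ∀ x ∈ stInt a b, 0 ≤ m x) (hmi : ∀ x ∈ stInt a b, IntegrableOn m (Ioo a x))
    (hcmi : ∀ x ∈ stInt a b, IntegrableOn (fun u => c u * m u) (Ioo a x))
    (hnot : ¬ IntegrableOn m (stInt a b)) (hc : Tendsto c (atB b) (𝓝 cb)) :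
    (fun v => (∫ u in Ioo a v, c u * m u) - cb * ∫ u in Ioo a v, m u)
      =o[atB b] fun v => ∫ u in Ioo a v, m u := by
  have hii : ∀ f : ℝ → ℝ, (∀ x ∈ stInt a b, IntegrableOn f (Ioo a x)) →
      ∀ y ∈ stInt a b, IntervalIntegrable f volume a y := fun f hf y hy =>
    (intervalIntegrable_iff_integrableOn_Ioo_of_le hy.1.le).2 (hf y hy)
  have hprim : ∀ f : ℝ → ℝ,
      (fun v => ∫ u in Ioo a v, f u) =ᶠ[atB b] fun v => ∫ u in a..v, f u := fun f => by
    filter_upwards [stInt_mem_atB hab] with v hv using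
      setIntegral_Ioo_eq_intervalIntegral hv.1.le f
  have hsmall : (fun v => c v * m v - cb * m v) =o[atB b] m := by
    simpa only [sub_mul, one_mul] using
      ((isLittleO_one_iff ℝ).2 (tendsto_sub_nhds_zero_iff.2 hc)).mul_isBigO (isBigO_refl m _)
  have hStolz := isLittleO_sub_mul_of_isLittleO_increments (G := fun v => ∫ u in a..v, c u * m u)
    ((tendsto_setIntegral_Ioo_atB_atTop hab hm hm₀ hmi hnot).congr' (hprim m))
    (isLittleO_primitive_increments hab (hii _ hcmi) (hii m hmi) hm₀ hsmall)
  refine hStolz.congr' ?_ (hprim m).symm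
  filter_upwards [hprim (fun u => c u * m u), hprim m] with v h₁ h₂
  rw [h₁, h₂]

end StateInterval

section Diffusion

variable {a x₀ : ℝ} {b : EReal} {μ σ : ℝ → ℝ}

lemma continuousOn_sDen (hx₀ : x₀ ∈ stInt a b) (hμ : ContinuousOn μ (stInt a b))
    (hσ : ContinuousOn σ (stInt a b)) (hσpos : ∀ x ∈ stInt a b, 0 < σ x ^ 2) :
    ContinuousOn (sDen μ σ x₀) (stInt a b) := by
  have hf : ContinuousOn (fun y => 2 * μ y / σ y ^ 2) (stInt a b) :=
    (continuousOn_const.mul hμ).div (hσ.pow 2) fun x hx => (hσpos x hx).ne'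
  exact Real.continuous_exp.comp_continuousOn (continuousOn_primitive_of_isOpen
    (isOpen_stInt a b) hf fun v hv => hf.intervalIntegrable_of_mem_stInt hx₀ hv).neg

lemma mDen_pos (hσpos : ∀ x ∈ stInt a b, 0 < σ x ^ 2) {x : ℝ} (hx : x ∈ stInt a b) :
    0 < mDen μ σ x₀ x :=
  div_pos two_pos (mul_pos (hσpos x hx) (Real.exp_pos _))

lemma continuousOn_mDen (hx₀ : x₀ ∈ stInt a b) (hμ : ContinuousOn μ (stInt a b))
    (hσ : ContinuousOn σ (stInt a b)) (hσpos : ∀ x ∈ stInt a b, 0 < σ x ^ 2) :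
    ContinuousOn (mDen μ σ x₀) (stInt a b) :=
  continuousOn_const.div ((hσ.pow 2).mul (continuousOn_sDen hx₀ hμ hσ hσpos)) fun x hx =>
    (mul_pos (hσpos x hx) (Real.exp_pos _)).ne'

lemma Mab_mul_sDen_pos (hσpos : ∀ x ∈ stInt a b, 0 < σ x ^ 2)
    (hMfin : ∀ x ∈ stInt a b, IntegrableOn (mDen μ σ x₀) (Ioo a x)) {x : ℝ}
    (hx : x ∈ stInt a b) : 0 < Mab μ σ x₀ a x * sDen μ σ x₀ x :=
  mul_pos (setIntegral_Ioo_pos hx.1 (hMfin x hx) fun _ hu =>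
    mDen_pos hσpos (Ioo_subset_stInt hx hu)) (Real.exp_pos _)

lemma isLittleO_setIntegral_Ioo_sub_cbar_mul (hab : (a : EReal) < b)
    (hx₀ : x₀ ∈ stInt a b) (hμ : ContinuousOn μ (stInt a b))
    (hσ : ContinuousOn σ (stInt a b)) (hσpos : ∀ x ∈ stInt a b, 0 < σ x ^ 2)
    (hMfin : ∀ x ∈ stInt a b, IntegrableOn (mDen μ σ x₀) (Ioo a x))
    {c : ℝ → ℝ} {cb : ℝ} (hc : ContinuousOn c (stInt a b)) (hc₀ : ∀ x ∈ stInt a b, 0 ≤ c x)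
    (hcmono : MonotoneOn c (stInt a b)) (hcb : Tendsto c (atB b) (𝓝 cb)) :
    (fun v => (∫ u in Ioo a v, c u * mDen μ σ x₀ u) - cbar μ σ c x₀ a b cb * Mab μ σ x₀ a v)
      =o[atB b] Mab μ σ x₀ a := by
  have hcm := integrableOn_mul_of_monotoneOn hab hc hc₀ hcmono hcb (m := mDen μ σ x₀)
  unfold cbar
  split_ifs with hint
  · have hS := (isOpen_stInt a b).measurableSet
    have hpos : 0 < ∫ u in stInt a b, mDen μ σ x₀ u :=
      (setIntegral_Ioo_pos hx₀.1 (hMfin x₀ hx₀) fun x hx =>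
        mDen_pos hσpos (Ioo_subset_stInt hx₀ hx)).trans_le <|
      setIntegral_mono_set hint ((ae_restrict_mem hS).mono fun x hx => (mDen_pos hσpos hx).le)
        (Ioo_subset_stInt hx₀).eventuallyLE
    exact isLittleO_setIntegral_Ioo_sub_of_integrableOn hab (hcm subset_rfl hS hint) hint hpos.ne'
  · exact isLittleO_setIntegral_Ioo_sub_of_not_integrableOn hab
      (continuousOn_mDen hx₀ hμ hσ hσpos) (fun x hx => (mDen_pos hσpos hx).le) hMfin
      (fun x hx => hcm (Ioo_subset_stInt hx) measurableSet_Ioo (hMfin x hx)) hint hcb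

lemma isLittleO_gF_xiF_increments (hab : (a : EReal) < b)
    (hx₀ : x₀ ∈ stInt a b) (hμ : ContinuousOn μ (stInt a b))
    (hσ : ContinuousOn σ (stInt a b)) (hσpos : ∀ x ∈ stInt a b, 0 < σ x ^ 2)
    (hMfin : ∀ x ∈ stInt a b, IntegrableOn (mDen μ σ x₀) (Ioo a x))
    {c : ℝ → ℝ} {cb : ℝ} (hc : ContinuousOn c (stInt a b)) (hc₀ : ∀ x ∈ stInt a b, 0 ≤ c x)
    (hcmono : MonotoneOn c (stInt a b)) (hcb : Tendsto c (atB b) (𝓝 cb)) :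
    (fun q : ℝ × ℝ => gF μ σ c x₀ a q.2 - gF μ σ c x₀ a q.1 -
        cbar μ σ c x₀ a b cb * (xiF μ σ x₀ a q.2 - xiF μ σ x₀ a q.1)) =o[atB b ×ˢ atB b]
      fun q => xiF μ σ x₀ a q.2 - xiF μ σ x₀ a q.1 := by
  have hs := continuousOn_sDen hx₀ hμ hσ hσpos
  have hm := continuousOn_mDen hx₀ hμ hσ hσpos
  have hA : ContinuousOn (fun v => ∫ u in Ioo a v, c u * mDen μ σ x₀ u) (stInt a b) :=
    continuousOn_setIntegral_Ioo (hc.mul hm) fun x hx => integrableOn_mul_of_monotoneOn hab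
      hc hc₀ hcmono hcb (Ioo_subset_stInt hx) measurableSet_Ioo (hMfin x hx)
  have hM : ContinuousOn (Mab μ σ x₀ a) (stInt a b) := continuousOn_setIntegral_Ioo hm hMfin
  have hderiv := ((isLittleO_setIntegral_Ioo_sub_cbar_mul hab hx₀ hμ hσ hσpos hMfin
    hc hc₀ hcmono hcb).mul_isBigO (isBigO_refl (sDen μ σ x₀) (atB b))).congr_left
    fun v => (sub_mul _ _ _).trans (by rw [mul_assoc])
  exact isLittleO_primitive_increments hab
    (fun y hy => (hA.mul hs).intervalIntegrable_of_mem_stInt hx₀ hy)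
    (fun y hy => (hM.mul hs).intervalIntegrable_of_mem_stInt hx₀ hy)
    (fun x hx => (Mab_mul_sDen_pos hσpos hMfin hx).le) hderiv

lemma xiF_sub_xiF_pos (hx₀ : x₀ ∈ stInt a b) (hμ : ContinuousOn μ (stInt a b))
    (hσ : ContinuousOn σ (stInt a b)) (hσpos : ∀ x ∈ stInt a b, 0 < σ x ^ 2)
    (hMfin : ∀ x ∈ stInt a b, IntegrableOn (mDen μ σ x₀) (Ioo a x)) {w y : ℝ}
    (hw : w ∈ stInt a b) (hy : y ∈ stInt a b) (hwy : w < y) :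
    0 < xiF μ σ x₀ a y - xiF μ σ x₀ a w :=
  intervalIntegral_sub_intervalIntegral_pos (ordConnected_stInt a b)
    (fun _ hv => ((continuousOn_setIntegral_Ioo (continuousOn_mDen hx₀ hμ hσ hσpos) hMfin).mul
      (continuousOn_sDen hx₀ hμ hσ hσpos)).intervalIntegrable_of_mem_stInt hx₀ hv)
    (fun _ hx => Mab_mul_sDen_pos hσpos hMfin hx) hw hy hwy

end Diffusion

theorem statement10_general    (a : ℝ) (b : EReal) (hab : (a : EReal) < b)
    (μ σ : ℝ → ℝ) (x₀ : ℝ) (hx₀ : x₀ ∈ stInt a b)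
    (hμcont : ContinuousOn μ (stInt a b)) (hσcont : ContinuousOn σ (stInt a b))
    (hσpos : ∀ x ∈ stInt a b, 0 < (σ x) ^ 2)
    (hMfin : ∀ x ∈ stInt a b, IntegrableOn (mDen μ σ x₀) (Set.Ioo a x))
    (hbnat : Tendsto (xiF μ σ x₀ a) (atB b) atTop)
    (c : ℝ → ℝ) (hccont : ContinuousOn c (stInt a b))
    (hcnn : ∀ x ∈ stInt a b, 0 ≤ c x) (hcmono : MonotoneOn c (stInt a b))
    (cb : ℝ) (hcb : Tendsto c (atB b) (𝓝 cb))
    :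
    Tendsto (fun y => gF μ σ c x₀ a y / xiF μ σ x₀ a y) (atB b)
      (𝓝 (cbar μ σ c x₀ a b cb)) ∧
    (∀ y₀ ∈ stInt a b,
      Tendsto (fun y => (gF μ σ c x₀ a y - gF μ σ c x₀ a y₀) /
          (xiF μ σ x₀ a y - xiF μ σ x₀ a y₀)) (atB b) (𝓝 (cbar μ σ c x₀ a b cb))) ∧
    Tendsto (fun q : ℝ × ℝ =>
        (gF μ σ c x₀ a q.2 - gF μ σ c x₀ a q.1) / (xiF μ σ x₀ a q.2 - xiF μ σ x₀ a q.1))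
      (((atB b) ×ˢ (atB b)) ⊓ 𝓟 {q : ℝ × ℝ | q.1 < q.2 ∧ (q.2 : EReal) < b})
      (𝓝 (cbar μ σ c x₀ a b cb)) := by
  have hinc := isLittleO_gF_xiF_increments hab hx₀ hμcont hσcont hσpos hMfin
    hccont hcnn hcmono hcb
  refine ⟨tendsto_div_of_isLittleO_increments hbnat hinc, fun y₀ _ => ?_, ?_⟩
  · have hξ : Tendsto (fun y => xiF μ σ x₀ a y - xiF μ σ x₀ a y₀) (atB b) atTop := by
      simpa only [sub_eq_add_neg] using tendsto_atTop_add_const_right _ _ hbnat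
    exact tendsto_div_of_isLittleO_increments (G := fun y => gF μ σ c x₀ a y - gF μ σ c x₀ a y₀)
      hξ (hinc.congr (fun q => by ring) fun q => by ring)
  · refine tendsto_div_of_isLittleO_sub_mul (hinc.mono inf_le_left) ?_
    filter_upwards [mem_inf_of_left (prod_mem_prod (stInt_mem_atB hab) (stInt_mem_atB hab)),
      mem_inf_of_right (mem_principal_self _)] with q hq hlt
    exact (xiF_sub_xiF_pos hx₀ hμcont hσcont hσpos hMfin hq.1 hq.2 hlt.1).ne'

theorem statement10    (a : ℝ) (b : EReal) (hab : (a : EReal) < b)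
    (μ σ : ℝ → ℝ) (x₀ : ℝ) (hx₀ : x₀ ∈ stInt a b)
    (hμcont : ContinuousOn μ (stInt a b)) (hσcont : ContinuousOn σ (stInt a b))
    (hσpos : ∀ x ∈ stInt a b, 0 < (σ x) ^ 2)
    (hMfin : ∀ x ∈ stInt a b, IntegrableOn (mDen μ σ x₀) (Set.Ioo a x))
    (hsa : Tendsto (sDen μ σ x₀) (𝓝[>] a) atTop)
    (hsMb : Tendsto (fun x => sDen μ σ x₀ x * Mab μ σ x₀ a x) (atB b) atTop)
    (hbnat : Tendsto (xiF μ σ x₀ a) (atB b) atTop)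
    (c : ℝ → ℝ) (hccont : ContinuousOn c (stInt a b))
    (hcnn : ∀ x ∈ stInt a b, 0 ≤ c x) (hcmono : MonotoneOn c (stInt a b))
    (ca cb : ℝ) (hca : Tendsto c (𝓝[>] a) (𝓝 ca)) (hcb : Tendsto c (atB b) (𝓝 cb))
    (hca0 : 0 ≤ ca) (hcacb : ca < cb)
    :
    Tendsto (fun y => gF μ σ c x₀ a y / xiF μ σ x₀ a y) (atB b)
      (𝓝 (cbar μ σ c x₀ a b cb)) ∧
    (∀ y₀ ∈ stInt a b,
      Tendsto (fun y => (gF μ σ c x₀ a y - gF μ σ c x₀ a y₀) /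
          (xiF μ σ x₀ a y - xiF μ σ x₀ a y₀)) (atB b) (𝓝 (cbar μ σ c x₀ a b cb))) ∧
    Tendsto (fun q : ℝ × ℝ =>
        (gF μ σ c x₀ a q.2 - gF μ σ c x₀ a q.1) / (xiF μ σ x₀ a q.2 - xiF μ σ x₀ a q.1))
      (((atB b) ×ˢ (atB b)) ⊓ 𝓟 {q : ℝ × ℝ | q.1 < q.2 ∧ (q.2 : EReal) < b})
      (𝓝 (cbar μ σ c x₀ a b cb)) :=
  statement10_general a b hab μ σ x₀ hx₀ hμcont hσcont hσpos hMfin hbnat c hccont hcnn hcmono cb hcb
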